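/- arXiv:1708.00780 — 2 statements merged into one kernel-verified Lean document; each statement's English description precedes it below -/
import Mathlib

section
/- Let V_1,...,V_r be finite-dimensional subspaces of a vector space V. The maximum size of a subset J ⊆ {1,...,r} for which there exist linearly independent vectors v_i ∈ V_i (i ∈ J) equals min over I ⊆ {1,...,r} of (dim(∑_{i∈I} V_i) + r − |I|). -/
/-!
Linearly independent representatives for `J` put at most `dim (∑_{i ∈ I} V i)` of their
vectors inside `∑_{i ∈ I} V i` and at most `r - |I|` outside `I`, which gives one inequality.
For the other, call `m` admissible when `m + |I| ≤ dim (∑_{i ∈ I} V i) + r` for all `I`.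
Following Rado, shrink the subspaces while keeping `m` admissible: if `dim V i₀ ≥ 2`, write
`V i₀ = W ⊔ W'` with `W, W' < V i₀`; if `m` were admissible for neither replacement, the two
violating sets `I, I' ∋ i₀` would, by the modular law for dimensions, make `I ∪ I'` or
`(I ∩ I') \ {i₀}` violate admissibility for the original family. Once all subspaces are lines
or zero, admissibility at `I = univ` says that their generators span a space of dimension at
least `m`.
-/

open Module Submodule Function
open scoped Finset

theorem Finset.sup_update_of_mem {ι α : Type*} [DecidableEq ι] [SemilatticeSup α] [OrderBot α]
    {s : Finset ι} {i : ι} (hi : i ∈ s) (f : ι → α) (a : α) :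
    s.sup (update f i a) = a ⊔ (s.erase i).sup f := by
  conv_lhs => rw [← Finset.insert_erase hi]
  rw [Finset.sup_insert, update_self]
  exact congrArg (a ⊔ ·) <|
    Finset.sup_congr rfl fun _ hj => update_of_ne (Finset.ne_of_mem_erase hj) _ _

theorem Finset.sup_update_of_notMem {ι α : Type*} [DecidableEq ι] [SemilatticeSup α]
    [OrderBot α] {s : Finset ι} {i : ι} (hi : i ∉ s) (f : ι → α) (a : α) :
    s.sup (update f i a) = s.sup f :=
  Finset.sup_congr rfl fun _ hj => update_of_ne (ne_of_mem_of_not_mem hj hi) _ _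

theorem exists_lt_sup_eq_of_bot_lt_of_lt {α : Type*} [Lattice α] [BoundedOrder α]
    [IsModularLattice α] [ComplementedLattice α] {a p : α} (ha : ⊥ < a) (hap : a < p) :
    ∃ b < p, a ⊔ b = p := by
  obtain ⟨c, hc⟩ := exists_isCompl a
  refine ⟨c ⊓ p, inf_le_right.lt_of_ne fun h => ha.ne' ?_, ?_⟩
  · exact hc.disjoint.eq_bot_of_le (hap.le.trans (h ▸ inf_le_left))
  · rw [← sup_inf_assoc_of_le c hap.le, hc.sup_eq_top, top_inf_eq]

section

variable {F V : Type*} [Field F] [AddCommGroup V] [Module F V]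

theorem Submodule.exists_lt_lt_sup_eq_of_two_le_finrank {P : Submodule F V}
    [FiniteDimensional F P] (h : 2 ≤ finrank F ↥P) : ∃ W < P, ∃ W' < P, W ⊔ W' = P := by
  obtain ⟨x, hxP, hx⟩ := exists_mem_ne_zero_of_ne_bot (p := P) fun hP => by
    rw [hP, finrank_bot] at h; omega
  have hbot : ⊥ < span F {x} := bot_lt_iff_ne_bot.2 (span_singleton_eq_bot.not.2 hx)
  have hlt : span F {x} < P := (span_singleton_le_iff_mem x P).2 hxP |>.lt_of_ne fun hP => by
    rw [← hP, finrank_span_singleton hx] at h; omega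
  obtain ⟨W', hW', hsup⟩ := exists_lt_sup_eq_of_bot_lt_of_lt hbot hlt
  exact ⟨_, hlt, W', hW', hsup⟩

theorem exists_finset_linearIndependent_card_eq_finrank_span {ι : Type*} [Fintype ι]
    (v : ι → V) : ∃ J : Finset ι, #J = finrank F ↥(span F (Set.range v)) ∧
      LinearIndependent F (fun i : J => v i) := by
  classical
  obtain ⟨b, -, -, hspan, hind⟩ :=
    exists_linearIndepOn_extension (linearIndepOn_empty F v) (Set.empty_subset Set.univ)
  have hspan_eq : span F (Set.range v) = span F (Set.range fun i : b => v i) := by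
    rw [← Set.image_eq_range, ← Set.image_univ]
    exact le_antisymm (span_le.2 hspan) (span_mono (Set.image_mono (Set.subset_univ b)))
  refine ⟨b.toFinset, ?_, ?_⟩
  · rw [hspan_eq, finrank_span_eq_card hind, Set.toFinset_card]
  · rwa [← Set.coe_toFinset b] at hind

variable {ι : Type*}

def HasLinearIndepReps (Vs : ι → Submodule F V) (J : Finset ι) : Prop :=
  ∃ v : ι → V, (∀ i ∈ J, v i ∈ Vs i) ∧ LinearIndependent F (fun i : J => v i)

/-- Admissibility of `m`, in the truncation-free form of
`m ≤ dim (∑_{i ∈ I} Vs i) + |ι| - |I|`. -/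
def RadoCondition [Fintype ι] (Vs : ι → Submodule F V) (m : ℕ) : Prop :=
  ∀ I : Finset ι, m + #I ≤ finrank F ↥(I.sup Vs) + Fintype.card ι

namespace HasLinearIndepReps

variable {Vs Ws : ι → Submodule F V} {J J' : Finset ι}

theorem subset (h : HasLinearIndepReps Vs J) (hJ : J' ⊆ J) : HasLinearIndepReps Vs J' := by
  obtain ⟨v, hv, hind⟩ := h
  exact ⟨v, fun i hi => hv i (hJ hi),
    hind.comp (fun i : J' => ⟨i, hJ i.2⟩) fun _ _ hij => Subtype.ext (Subtype.mk.inj hij)⟩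

theorem mono (h : HasLinearIndepReps Ws J) (hle : Ws ≤ Vs) : HasLinearIndepReps Vs J := by
  obtain ⟨v, hv, hind⟩ := h
  exact ⟨v, fun i hi => hle i (hv i hi), hind⟩

theorem card_le_finrank_sup [∀ i, FiniteDimensional F (Vs i)] (h : HasLinearIndepReps Vs J) :
    #J ≤ finrank F ↥(J.sup Vs) := by
  obtain ⟨v, hv, hind⟩ := h
  have hspan : span F (Set.range fun i : J => v i) ≤ J.sup Vs :=
    span_le.2 <| Set.range_subset_iff.2 fun i => Finset.le_sup (f := Vs) i.2 (hv i i.2)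
  simpa [finrank_span_eq_card hind] using finrank_mono hspan

theorem radoCondition [Fintype ι] [∀ i, FiniteDimensional F (Vs i)]
    (h : HasLinearIndepReps Vs J) : RadoCondition Vs #J := by
  classical
  intro I
  have hinside : #(J ∩ I) ≤ finrank F ↥(I.sup Vs) :=
    ((h.subset Finset.inter_subset_left).card_le_finrank_sup).trans
      (finrank_mono (Finset.sup_mono Finset.inter_subset_right))
  have houtside : #(J \ I) ≤ #Iᶜ :=
    Finset.card_le_card fun i hi => Finset.mem_compl.2 (Finset.mem_sdiff.1 hi).2
  have := Finset.card_inter_add_card_sdiff J I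
  have := Finset.card_compl I
  have := Finset.card_le_univ I
  omega

end HasLinearIndepReps

namespace RadoCondition

variable [Fintype ι] {Vs : ι → Submodule F V} {m : ℕ}

theorem exists_hasLinearIndepReps_of_finrank_le_one [∀ i, FiniteDimensional F (Vs i)]
    (h : RadoCondition Vs m) (hVs : ∀ i, finrank F ↥(Vs i) ≤ 1) :
    ∃ J : Finset ι, m ≤ #J ∧ HasLinearIndepReps Vs J := by
  have hprincipal i : (Vs i).IsPrincipal := (finrank_le_one_iff_isPrincipal _).1 (hVs i)
  let v i := IsPrincipal.generator (Vs i)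
  obtain ⟨J, hJ, hind⟩ := exists_finset_linearIndependent_card_eq_finrank_span (F := F) v
  refine ⟨J, ?_, v, fun i _ => IsPrincipal.generator_mem (Vs i), hind⟩
  have hspan : span F (Set.range v) = Finset.univ.sup Vs := by
    simp only [span_range_eq_iSup, Finset.sup_univ_eq_iSup, v, IsPrincipal.span_singleton_generator]
  have := h Finset.univ
  rw [← hspan, ← hJ, Finset.card_univ] at this
  omega

theorem update_or [DecidableEq ι] [∀ i, FiniteDimensional F (Vs i)] (h : RadoCondition Vs m)
    {i₀ : ι} {W W' : Submodule F V} (hW : W ⊔ W' = Vs i₀) :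
    RadoCondition (update Vs i₀ W) m ∨ RadoCondition (update Vs i₀ W') m := by
  have : FiniteDimensional F W := finiteDimensional_of_le (hW ▸ le_sup_left)
  have : FiniteDimensional F W' := finiteDimensional_of_le (hW ▸ le_sup_right)
  have violator (U : Submodule F V) (hU : ¬ RadoCondition (update Vs i₀ U) m) :
      ∃ I, i₀ ∈ I ∧
        finrank F ↥(U ⊔ (I.erase i₀).sup Vs) + Fintype.card ι < m + #I := by
    simp only [RadoCondition, not_forall, not_le] at hU
    obtain ⟨I, hI⟩ := hU
    by_cases hi : i₀ ∈ I
    · exact ⟨I, hi, by rwa [Finset.sup_update_of_mem hi] at hI⟩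
    · rw [Finset.sup_update_of_notMem hi] at hI
      exact absurd (h I) hI.not_ge
  by_contra! hcon
  obtain ⟨I, hI, hIlt⟩ := violator W hcon.1
  obtain ⟨I', hI', hI'lt⟩ := violator W' hcon.2
  set S := (I.erase i₀).sup Vs
  set S' := (I'.erase i₀).sup Vs
  have hsup : (W ⊔ S) ⊔ (W' ⊔ S') = (I ∪ I').sup Vs := by
    rw [sup_sup_sup_comm, hW, ← Finset.sup_union, ← Finset.erase_union_distrib,
      ← Finset.sup_update_of_mem (Finset.mem_union_left I' hI), update_eq_self]
  have hinf : ((I ∩ I').erase i₀).sup Vs ≤ (W ⊔ S) ⊓ (W' ⊔ S') :=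
    le_inf
      (le_sup_of_le_right (Finset.sup_mono (Finset.erase_subset_erase _ Finset.inter_subset_left)))
      (le_sup_of_le_right (Finset.sup_mono (Finset.erase_subset_erase _ Finset.inter_subset_right)))
  have hunion := h (I ∪ I')
  have hinter := h ((I ∩ I').erase i₀)
  rw [← hsup] at hunion
  have := finrank_mono hinf
  have := finrank_sup_add_finrank_inf_eq (W ⊔ S) (W' ⊔ S')
  have := Finset.card_union_add_card_inter I I'
  have := Finset.card_erase_of_mem (Finset.mem_inter.2 ⟨hI, hI'⟩)
  have := Finset.card_pos.2 ⟨i₀, Finset.mem_inter.2 ⟨hI, hI'⟩⟩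
  omega

theorem exists_lt_update [DecidableEq ι] [∀ i, FiniteDimensional F (Vs i)]
    (h : RadoCondition Vs m) {i₀ : ι} (hi₀ : 2 ≤ finrank F ↥(Vs i₀)) :
    ∃ U < Vs i₀, RadoCondition (update Vs i₀ U) m := by
  obtain ⟨W, hW, W', hW', hsup⟩ := exists_lt_lt_sup_eq_of_two_le_finrank hi₀
  rcases h.update_or hsup with h' | h'
  exacts [⟨W, hW, h'⟩, ⟨W', hW', h'⟩]

theorem exists_hasLinearIndepReps [∀ i, FiniteDimensional F (Vs i)] (h : RadoCondition Vs m) :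
    ∃ J : Finset ι, #J = m ∧ HasLinearIndepReps Vs J := by
  classical
  suffices ∃ J : Finset ι, m ≤ #J ∧ HasLinearIndepReps Vs J by
    obtain ⟨J, hmJ, hJ⟩ := this
    obtain ⟨J', hJ'J, hJ'⟩ := Finset.exists_subset_card_eq hmJ
    exact ⟨J', hJ', hJ.subset hJ'J⟩
  induction hn : ∑ i, finrank F ↥(Vs i) using Nat.strong_induction_on generalizing Vs with
  | _ n ih =>
    by_cases hVs : ∀ i, finrank F ↥(Vs i) ≤ 1
    · exact h.exists_hasLinearIndepReps_of_finrank_le_one hVs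
    obtain ⟨i₀, hi₀⟩ := not_forall.1 hVs
    obtain ⟨U, hU, hUrado⟩ := h.exists_lt_update (not_le.1 hi₀)
    have hle : update Vs i₀ U ≤ Vs := update_le_iff.2 ⟨hU.le, fun _ _ => le_rfl⟩
    have (i : ι) : FiniteDimensional F ↥(update Vs i₀ U i) := finiteDimensional_of_le (hle i)
    have hlt : ∑ i, finrank F ↥(update Vs i₀ U i) < n := hn ▸ Finset.sum_lt_sum
      (fun i _ => finrank_mono (hle i)) ⟨i₀, Finset.mem_univ _, by
        rw [update_self]; exact finrank_lt_finrank_of_lt hU⟩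
    obtain ⟨J, hmJ, hJ⟩ := ih _ hlt hUrado rfl
    exact ⟨J, hmJ, hJ.mono hle⟩

end RadoCondition

theorem radoCondition_iff_exists_hasLinearIndepReps [Fintype ι] {Vs : ι → Submodule F V}
    [∀ i, FiniteDimensional F (Vs i)] {m : ℕ} :
    RadoCondition Vs m ↔ ∃ J : Finset ι, #J = m ∧ HasLinearIndepReps Vs J :=
  ⟨RadoCondition.exists_hasLinearIndepReps, fun ⟨_, hJ, h⟩ => hJ ▸ h.radoCondition⟩

end

/-- **Linearized König theorem (defect form of Rado's theorem).** For finite-dimensional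
subspaces `V 1, ..., V r` of a vector space `V`, the maximum size of a subset
`J ⊆ [r]` admitting linearly independent representatives `v i ∈ V i` (`i ∈ J`) equals
`min_{I ⊆ [r]} (dim (∑_{i ∈ I} V i) + r - |I|)`. -/
theorem linearized_konig {F V : Type*} [Field F] [AddCommGroup V] [Module F V] {r : ℕ}
    (Vs : Fin r → Submodule F V) (hfin : ∀ i, FiniteDimensional F ↥(Vs i)) :
    IsGreatest {k : ℕ | ∃ J : Finset (Fin r), J.card = k ∧
        ∃ v : Fin r → V, (∀ i ∈ J, v i ∈ Vs i) ∧
          LinearIndependent F (fun i : ↥J => v i)}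
      (⨅ I : Finset (Fin r), (Module.finrank F ↥(⨆ i ∈ I, Vs i) + r - I.card)) := by
  have hrado (k : ℕ) : RadoCondition Vs k ↔
      k ≤ ⨅ I : Finset (Fin r), (Module.finrank F ↥(⨆ i ∈ I, Vs i) + r - I.card) := by
    rw [le_ciInf_iff (OrderBot.bddBelow _)]
    refine forall_congr' fun I => ?_
    rw [← Finset.sup_eq_iSup, Fintype.card_fin,
      Nat.le_sub_iff_add_le (le_add_left (I.card_le_univ.trans_eq (Fintype.card_fin r)))]
  have hreps (k : ℕ) : (∃ J : Finset (Fin r), #J = k ∧ HasLinearIndepReps Vs J) ↔ k ≤ _ :=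
    radoCondition_iff_exists_hasLinearIndepReps.symm.trans (hrado k)
  exact ⟨(hreps _).2 le_rfl, fun k hk => (hreps k).1 hk⟩
end

section
/- For full-rank O-lattices L, M, N in K^n with coweight-valued distances d(L,N) and sums of largest entries d_i(L,M) = μ_1 + ... + μ_i where d(L,M) = (μ_1 ≥ ... ≥ μ_n), the triangle inequality d_i(L,N) ≤ d_i(L,M) + d_i(M,N) holds for every 1 ≤ i ≤ n, and d_n(L,N) = d_n(L,M) + d_n(M,N). -/
noncomputable section
open scoped Classical

variable {F : Type*} [Field F] {n : ℕ}

/-- `v` is a basis (over `F[[t]]`) of the full-rank lattice `L` in `K^n`, `K = F((t))`. -/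
def IsLatticeBasis (L : Submodule (PowerSeries F) (Fin n → LaurentSeries F))
    (v : Fin n → Fin n → LaurentSeries F) : Prop :=
  LinearIndependent (LaurentSeries F) v ∧ L = Submodule.span (PowerSeries F) (Set.range v)

/-- `L` is a full-rank `F[[t]]`-lattice in `K^n`. -/
def IsFullLattice (L : Submodule (PowerSeries F) (Fin n → LaurentSeries F)) : Prop :=
  ∃ v, IsLatticeBasis L v

/-- `t^λ` as an element of `K = F((t))`. -/
def tpow (lam : ℤ) : LaurentSeries F := HahnSeries.single lam 1

/-- `val (det L) = d` : the valuation of the determinant of an `O`-basis of `L` is `d`. -/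
def HasValDet (L : Submodule (PowerSeries F) (Fin n → LaurentSeries F)) (d : ℤ) : Prop :=
  ∃ v, IsLatticeBasis L v ∧ (Matrix.of v).det.order = d

/-- `w` is a generator of `L`: it belongs to some `O`-basis of `L`. -/
def IsGen (L : Submodule (PowerSeries F) (Fin n → LaurentSeries F))
    (w : Fin n → LaurentSeries F) : Prop :=
  ∃ v i, IsLatticeBasis L v ∧ v i = w

/-- `c(w, M) = lam`, i.e. `lam = min {μ : t^μ • w ∈ M}`. -/
def CVec (w : Fin n → LaurentSeries F) (M : Submodule (PowerSeries F) (Fin n → LaurentSeries F))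
    (lam : ℤ) : Prop :=
  IsLeast {μ : ℤ | (tpow μ : LaurentSeries F) • w ∈ M} lam

/-- `c(L, M) = c`, i.e. `c` is the minimum of `c(w,M)` over generators `w` of `L`. -/
def CLat (L M : Submodule (PowerSeries F) (Fin n → LaurentSeries F)) (c : ℤ) : Prop :=
  IsLeast {μ : ℤ | ∃ w, IsGen L w ∧ CVec w M μ} c

/-- `A(L_1, ..., L_n) = a` : the minimum of `val (det (v_1, ..., v_n))` over `v_i ∈ L_i`. -/
def AIs (Ls : Fin n → Submodule (PowerSeries F) (Fin n → LaurentSeries F)) (a : ℤ) : Prop :=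
  IsLeast {d : ℤ | ∃ v : Fin n → Fin n → LaurentSeries F,
    (∀ i, v i ∈ Ls i) ∧ (Matrix.of v).det ≠ 0 ∧ (Matrix.of v).det.order = d} a

/-- `x` lies in `t • L`. -/
def MemTL (L : Submodule (PowerSeries F) (Fin n → LaurentSeries F))
    (x : Fin n → LaurentSeries F) : Prop :=
  ∃ y ∈ L, x = (PowerSeries.X : PowerSeries F) • y

end
noncomputable section

/-- `d(L,M) = μ`, the coweight-valued distance: there is an `O`-basis `e_1, ..., e_n` of
`L` and a weakly decreasing sequence `μ_1 ≥ ... ≥ μ_n` (the elementary divisors of `M`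
relative to `L`) such that `t^{-μ_1} e_1, ..., t^{-μ_n} e_n` is an `O`-basis of `M`. -/
def IsDist {F : Type*} [Field F] {n : ℕ}
    (L M : Submodule (PowerSeries F) (Fin n → LaurentSeries F)) (μ : Fin n → ℤ) : Prop :=
  Antitone μ ∧ ∃ v, IsLatticeBasis L v ∧
    IsLatticeBasis M (fun i => (tpow (-(μ i)) : LaurentSeries F) • v i)

/-- `d_k(L,M)`: the sum of the first `k` (i.e. the `k` largest) entries of `d(L,M)`,
the pairing of `d(L,M)` with the fundamental weight `ω_k`. -/
def dPartial {n : ℕ} (k : ℕ) (μ : Fin n → ℤ) : ℤ :=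
  ∑ s ∈ Finset.univ.filter (fun s : Fin n => (s : ℕ) < k), μ s

end

/-!
Expressing all bases in one `O`-basis of `L`, the three distances give a factorisation
`t^{-ρ} B = C t^{-ν} A t^{-μ}` with `A, B, C ∈ GL_n(O)`. Taking valuations of determinants gives
the equality of total sums. For `d_k`, the reduction of `B` modulo `t` is invertible, so some
`k × k` minor of `B` on the first `k` rows is a unit, and the corresponding minor of the left side
has order exactly `-d_k(ρ)`. On the right, expanding the minor multilinearly in the rows shows
that its order is at least `-d_k(ν) - d_k(μ)`, since `k` distinct entries of an antitone sequence
sum to at most its first `k` entries.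
-/

namespace Matrix

variable {R : Type*} [CommRing R] {m l p : Type*} {k : ℕ}

theorem det_submatrix_mul_eq_sum [Fintype l] (X : Matrix m l R) (Y : Matrix l p R)
    (r : Fin k → m) (s : Fin k → p) :
    ((X * Y).submatrix r s).det =
      ∑ g : Fin k → l, (∏ i, X (r i) (g i)) * (Y.submatrix g s).det := by
  have hrows : (X * Y).submatrix r s = fun i => ∑ j, X (r i) j • (Y.submatrix id s) j := by
    ext i c
    simp [Matrix.mul_apply, Finset.sum_apply]
  rw [hrows]
  change (detRowAlternating : (Fin k → R) [⋀^Fin k]→ₗ[R] R).toMultilinearMap _ = _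
  rw [MultilinearMap.map_sum]
  refine Finset.sum_congr rfl fun g _ => ?_
  rw [MultilinearMap.map_smul_univ]
  rfl

theorem exists_isUnit_det_submatrix_castSucc [IsLocalRing R]
    (N : Matrix (Fin (k + 1)) (Fin (k + 1)) R) (hN : IsUnit N.det) :
    ∃ j : Fin (k + 1), IsUnit (N.submatrix Fin.castSucc j.succAbove).det := by
  rw [det_succ_row N (Fin.last k)] at hN
  obtain ⟨j, -, hj⟩ := IsLocalRing.exists_of_isUnit_sum hN
  refine ⟨j, ?_⟩
  rw [← Fin.succAbove_last]
  exact isUnit_of_mul_isUnit_right hj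

theorem exists_isUnit_det_submatrix_castLE [IsLocalRing R] {n : ℕ} (hk : k ≤ n)
    (B : Matrix (Fin n) (Fin n) R) (hB : IsUnit B.det) :
    ∃ s : Fin k → Fin n, IsUnit (B.submatrix (Fin.castLE hk) s).det := by
  induction hk using Nat.decreasingInduction with
  | self => exact ⟨id, by simpa using hB⟩
  | of_succ k hk ih =>
    obtain ⟨s, hs⟩ := ih
    obtain ⟨j, hj⟩ := exists_isUnit_det_submatrix_castSucc _ hs
    exact ⟨s ∘ j.succAbove, by simpa [submatrix_submatrix, Function.comp_def] using hj⟩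

theorem det_submatrix_diagonal_mul [Fintype m] [DecidableEq m] (d : m → R) (X : Matrix m p R)
    (r : Fin k → m) (s : Fin k → p) :
    ((diagonal d * X).submatrix r s).det = (∏ i, d (r i)) * (X.submatrix r s).det := by
  have : (diagonal d * X).submatrix r s = diagonal (d ∘ r) * X.submatrix r s := by
    ext; simp [diagonal_mul]
  rw [this, det_mul, det_diagonal]
  rfl

theorem det_submatrix_diagonal_mul_mul_diagonal [Fintype m] [Fintype p] [DecidableEq m]
    [DecidableEq p] (d : m → R) (X : Matrix m p R) (e : p → R) (r : Fin k → m) (s : Fin k → p) :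
    ((diagonal d * X * diagonal e).submatrix r s).det =
      (∏ i, d (r i)) * (X.submatrix r s).det * ∏ j, e (s j) := by
  have : (diagonal d * X * diagonal e).submatrix r s =
      diagonal (d ∘ r) * X.submatrix r s * diagonal (e ∘ s) := by
    ext; simp [diagonal_mul, mul_diagonal]
  rw [this, det_mul, det_mul, det_diagonal, det_diagonal]
  rfl

end Matrix

theorem Valuation.map_det_submatrix_mul_le {R Γ₀ : Type*} [CommRing R]
    [LinearOrderedCommGroupWithZero Γ₀] (v : Valuation R Γ₀) {m l p : Type*} [Fintype l] {k : ℕ}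
    {X : Matrix m l R} {Y : Matrix l p R} (hX : ∀ i j, v (X i j) ≤ 1) {s : Fin k → p} {c : Γ₀}
    (hY : ∀ g : Fin k → l, v (Y.submatrix g s).det ≤ c) (r : Fin k → m) :
    v ((X * Y).submatrix r s).det ≤ c := by
  rw [Matrix.det_submatrix_mul_eq_sum]
  refine v.map_sum_le fun g _ => ?_
  rw [v.map_mul, map_prod, ← one_mul c]
  exact mul_le_mul' (Finset.prod_le_one' fun i _ => hX _ _) (hY g)

namespace Finset

theorem sum_le_sum_of_card_eq {ι M : Type*} [DecidableEq ι] [AddCommMonoid M] [LinearOrder M]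
    [IsOrderedAddMonoid M] {s t : Finset ι} {f : ι → M} (hcard : #s = #t)
    (h : ∀ x ∈ s \ t, ∀ y ∈ t \ s, f x ≤ f y) : ∑ x ∈ s, f x ≤ ∑ x ∈ t, f x := by
  rw [← sum_inter_add_sum_sdiff s t, ← sum_inter_add_sum_sdiff t s, inter_comm t s]
  gcongr ∑ x ∈ s ∩ t, f x + ?_
  obtain hst | ⟨x₀, hx₀, hmax⟩ := (s \ t).eq_empty_or_nonempty.imp_right (exists_max_image _ f)
  · have hts : t \ s = ∅ := by rw [← card_eq_zero, ← card_sdiff_comm hcard, hst, card_empty]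
    simp [hst, hts]
  · calc ∑ x ∈ s \ t, f x ≤ #(s \ t) • f x₀ := sum_le_card_nsmul _ _ _ hmax
      _ = #(t \ s) • f x₀ := by rw [card_sdiff_comm hcard]
      _ ≤ ∑ y ∈ t \ s, f y := card_nsmul_le_sum _ _ _ (h x₀ hx₀)

end Finset

open Finset in
theorem sum_comp_le_dPartial {n k : ℕ} {a : Fin n → ℤ} (ha : Antitone a) {g : Fin k → Fin n}
    (hg : g.Injective) : ∑ i, a (g i) ≤ dPartial k a := by
  have hk : k ≤ n := by simpa using Fintype.card_le_of_injective g hg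
  refine (sum_map univ ⟨g, hg⟩ a).symm.trans_le ?_
  refine sum_le_sum_of_card_eq (by simp [Fin.card_filter_val_lt, hk]) fun x hx y hy => ha ?_
  simp only [mem_sdiff, mem_filter, mem_univ, true_and] at hx hy
  exact Fin.le_def.mpr (by omega)

open Finset in
theorem dPartial_eq_sum_castLE {n k : ℕ} (hk : k ≤ n) (a : Fin n → ℤ) :
    dPartial k a = ∑ i : Fin k, a (Fin.castLE hk i) := by
  have : univ.filter (fun s : Fin n => (s : ℕ) < k) = univ.map (Fin.castLEEmb hk) := by
    ext x
    simp only [mem_filter, mem_univ, true_and, mem_map, Fin.coe_castLEEmb]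
    exact ⟨fun hx => ⟨⟨x, hx⟩, rfl⟩, by rintro ⟨i, rfl⟩; exact i.2⟩
  rw [dPartial, this, sum_map]
  rfl

section LaurentSeries

open Matrix WithZero

variable {F : Type*} [Field F] {n : ℕ}

local notation "φ" => algebraMap (PowerSeries F) (LaurentSeries F)

theorem valuation_tpow (a : ℤ) : Valued.v (tpow a : LaurentSeries F) = exp (-a) :=
  LaurentSeries.valuation_single_zpow F a

theorem tpow_add (a b : ℤ) : (tpow (a + b) : LaurentSeries F) = tpow a * tpow b := by
  simp [tpow, HahnSeries.single_mul_single]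

theorem tpow_sum {ι : Type*} (s : Finset ι) (a : ι → ℤ) :
    (tpow (∑ i ∈ s, a i) : LaurentSeries F) = ∏ i ∈ s, tpow (a i) := by
  classical
  induction s using Finset.induction_on with
  | empty => rfl
  | insert i s hi ih => rw [Finset.sum_insert hi, Finset.prod_insert hi, tpow_add, ih]

theorem valuation_algebraMap_le_one (r : PowerSeries F) : Valued.v (φ r) ≤ 1 :=
  (LaurentSeries.val_le_one_iff_eq_coe F _).mpr ⟨r, by rw [LaurentSeries.coe_algebraMap]⟩

theorem valuation_algebraMap_of_isUnit {r : PowerSeries F} (hr : IsUnit r) : Valued.v (φ r) = 1 :=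
  Valuation.Integers.one_of_isUnit' hr valuation_algebraMap_le_one

/-- The diagonal matrix `t^{-a}`, so that `IsDist L M a` says that `t^{-a}` carries (the rows of)
some `O`-basis of `L` to an `O`-basis of `M`. -/
noncomputable def tpowDiag (a : Fin n → ℤ) : Matrix (Fin n) (Fin n) (LaurentSeries F) :=
  diagonal fun i => tpow (-(a i))

theorem valuation_prod_tpow_neg {ι : Type*} (s : Finset ι) (a : ι → ℤ) :
    Valued.v (∏ i ∈ s, tpow (-(a i)) : LaurentSeries F) = exp (∑ i ∈ s, a i) := by
  rw [← tpow_sum, Finset.sum_neg_distrib, valuation_tpow, neg_neg]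

theorem valuation_det_tpowDiag (a : Fin n → ℤ) :
    Valued.v (tpowDiag a : Matrix (Fin n) (Fin n) (LaurentSeries F)).det = exp (∑ i, a i) := by
  rw [tpowDiag, det_diagonal, valuation_prod_tpow_neg]

theorem of_tpow_neg_smul (a : Fin n → ℤ) (v : Fin n → Fin n → LaurentSeries F) :
    of (fun i => (tpow (-(a i)) : LaurentSeries F) • v i) = tpowDiag a * of v := by
  ext i j
  simp [tpowDiag, diagonal_mul]

theorem det_map_algebraMap {m : Type*} [Fintype m] [DecidableEq m]
    (A : Matrix m m (PowerSeries F)) : (A.map φ).det = φ A.det :=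
  (RingHom.map_det _ A).symm

theorem valuation_det_map_algebraMap_of_isUnit {m : Type*} [Fintype m] [DecidableEq m]
    {A : Matrix m m (PowerSeries F)} (hA : IsUnit A.det) : Valued.v (A.map φ).det = 1 := by
  rw [det_map_algebraMap, valuation_algebraMap_of_isUnit hA]

theorem exists_eq_map_mul_of_mem_span {m : Type*} {v : Fin n → Fin n → LaurentSeries F}
    {u : m → Fin n → LaurentSeries F}
    (hu : ∀ i, u i ∈ Submodule.span (PowerSeries F) (Set.range v)) :
    ∃ P : Matrix m (Fin n) (PowerSeries F), of u = P.map φ * of v := by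
  choose c hc using fun i => (Submodule.mem_span_range_iff_exists_fun _).mp (hu i)
  refine ⟨of c, ?_⟩
  ext i j
  simp [← hc i, mul_apply, Finset.sum_apply, Algebra.smul_def]

theorem IsLatticeBasis.exists_isUnit_det_eq_map_mul
    {L : Submodule (PowerSeries F) (Fin n → LaurentSeries F)}
    {v u : Fin n → Fin n → LaurentSeries F}
    (hv : IsLatticeBasis L v) (hu : IsLatticeBasis L u) :
    ∃ P : Matrix (Fin n) (Fin n) (PowerSeries F), IsUnit P.det ∧ of u = P.map φ * of v := by
  have hspan := hu.2.symm.trans hv.2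
  obtain ⟨P, hP⟩ := exists_eq_map_mul_of_mem_span (u := u) fun i =>
    hspan ▸ Submodule.subset_span (Set.mem_range_self i)
  obtain ⟨Q, hQ⟩ := exists_eq_map_mul_of_mem_span (u := v) fun i =>
    hspan.symm ▸ Submodule.subset_span (Set.mem_range_self i)
  have hV : IsUnit (of v) := linearIndependent_rows_iff_isUnit.mp hv.1
  have hQP : (Q * P).map φ = 1 := by
    rw [Matrix.map_mul, ← hV.mul_left_inj, Matrix.mul_assoc, ← hP, ← hQ, Matrix.one_mul]
  refine ⟨P, isUnit_det_of_left_inverse (B := Q) ?_, hP⟩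
  exact map_injective (IsFractionRing.injective (PowerSeries F) (LaurentSeries F))
    (by beta_reduce; rw [hQP, Matrix.map_one _ (map_zero φ) (map_one φ)])

theorem IsDist.exists_mul_eq {L M N : Submodule (PowerSeries F) (Fin n → LaurentSeries F)}
    {μ ν ρ : Fin n → ℤ} (hLM : IsDist L M μ) (hMN : IsDist M N ν) (hLN : IsDist L N ρ) :
    ∃ A B C : Matrix (Fin n) (Fin n) (PowerSeries F), IsUnit A.det ∧ IsUnit B.det ∧
      IsUnit C.det ∧
      tpowDiag ρ * B.map φ = C.map φ * (tpowDiag ν * A.map φ * tpowDiag μ) := by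
  obtain ⟨-, v, hv, hMv⟩ := hLM
  obtain ⟨-, w, hw, hNw⟩ := hMN
  obtain ⟨-, u, hu, hNu⟩ := hLN
  obtain ⟨A, hA, hwA⟩ := hMv.exists_isUnit_det_eq_map_mul hw
  obtain ⟨B, hB, huB⟩ := hv.exists_isUnit_det_eq_map_mul hu
  obtain ⟨C, hC, huC⟩ := hNw.exists_isUnit_det_eq_map_mul hNu
  simp only [of_tpow_neg_smul] at hwA huC
  have hV : IsUnit (of v) := linearIndependent_rows_iff_isUnit.mp hv.1
  refine ⟨A, B, C, hA, hB, hC, hV.mul_left_inj.mp ?_⟩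
  rw [Matrix.mul_assoc, ← huB, huC, hwA]
  simp only [Matrix.mul_assoc]

theorem valuation_det_submatrix_tpowDiag_mul_mul_tpowDiag_le {a b : Fin n → ℤ} (ha : Antitone a)
    (hb : Antitone b) (A : Matrix (Fin n) (Fin n) (PowerSeries F)) {k : ℕ} (g s : Fin k → Fin n) :
    Valued.v ((tpowDiag a * A.map φ * tpowDiag b).submatrix g s).det ≤
      exp (dPartial k a + dPartial k b) := by
  by_cases hg : g.Injective
  swap
  · obtain ⟨i, j, hij, hne⟩ := Function.not_injective_iff.mp hg
    rw [det_zero_of_row_eq hne (by ext; simp [hij]), map_zero]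
    exact zero_le
  by_cases hs : s.Injective
  swap
  · obtain ⟨i, j, hij, hne⟩ := Function.not_injective_iff.mp hs
    rw [det_zero_of_column_eq hne (by simp [hij]), map_zero]
    exact zero_le
  rw [tpowDiag, tpowDiag, det_submatrix_diagonal_mul_mul_diagonal, submatrix_map,
    det_map_algebraMap, map_mul, map_mul, valuation_prod_tpow_neg, valuation_prod_tpow_neg, exp_add]
  calc _ ≤ exp (∑ i, a (g i)) * 1 * exp (∑ j, b (s j)) := by
        gcongr; exact valuation_algebraMap_le_one _
    _ ≤ exp (dPartial k a) * exp (dPartial k b) := by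
        rw [mul_one]
        gcongr <;> exact exp_le_exp.mpr (sum_comp_le_dPartial ‹_› ‹_›)

theorem dPartial_le_add_of_mul_eq {μ ν ρ : Fin n → ℤ} (hμ : Antitone μ) (hν : Antitone ν)
    {A B C : Matrix (Fin n) (Fin n) (PowerSeries F)} (hB : IsUnit B.det)
    (h : tpowDiag ρ * B.map φ = C.map φ * (tpowDiag ν * A.map φ * tpowDiag μ)) {k : ℕ}
    (hk : k ≤ n) : dPartial k ρ ≤ dPartial k μ + dPartial k ν := by
  obtain ⟨s, hs⟩ := exists_isUnit_det_submatrix_castLE hk B hB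
  have hminor : Valued.v ((tpowDiag ρ * B.map φ).submatrix (Fin.castLE hk) s).det =
      exp (dPartial k ρ) := by
    rw [tpowDiag, det_submatrix_diagonal_mul, map_mul, valuation_prod_tpow_neg, submatrix_map,
      valuation_det_map_algebraMap_of_isUnit hs, mul_one, dPartial_eq_sum_castLE hk]
  have hbound := Valued.v.map_det_submatrix_mul_le (X := C.map φ)
    (fun i j => valuation_algebraMap_le_one (C i j))
    (fun g => valuation_det_submatrix_tpowDiag_mul_mul_tpowDiag_le hν hμ A g s) (Fin.castLE hk)
  rw [← h, hminor, exp_le_exp] at hbound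
  linarith

theorem sum_eq_add_of_mul_eq {μ ν ρ : Fin n → ℤ} {A B C : Matrix (Fin n) (Fin n) (PowerSeries F)}
    (hA : IsUnit A.det) (hB : IsUnit B.det) (hC : IsUnit C.det)
    (h : tpowDiag ρ * B.map φ = C.map φ * (tpowDiag ν * A.map φ * tpowDiag μ)) :
    ∑ i, ρ i = ∑ i, μ i + ∑ i, ν i := by
  have hval := congrArg (fun X => Valued.v X.det) h
  simp only [det_mul, map_mul, valuation_det_tpowDiag, valuation_det_map_algebraMap_of_isUnit hA,
    valuation_det_map_algebraMap_of_isUnit hB, valuation_det_map_algebraMap_of_isUnit hC, one_mul,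
    mul_one, ← exp_add, exp_inj] at hval
  linarith

end LaurentSeries

/-- **Triangle inequality in the dominance order.** For full-rank lattices `L, M, N` in
`K^n`, with `d_k` the sum of the `k` largest elementary divisors, one has
`d_k(L,N) ≤ d_k(L,M) + d_k(M,N)` for all `1 ≤ k ≤ n`, with equality of total sums:
`d_n(L,N) = d_n(L,M) + d_n(M,N)`. -/
theorem dist_triangle_dominance {F : Type*} [Field F] {n : ℕ}
    (L M N : Submodule (PowerSeries F) (Fin n → LaurentSeries F))
    (μ ν ρ : Fin n → ℤ)
    (hLM : IsDist L M μ) (hMN : IsDist M N ν) (hLN : IsDist L N ρ) :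
    (∀ k : ℕ, 1 ≤ k → k ≤ n → dPartial k ρ ≤ dPartial k μ + dPartial k ν) ∧
      (∑ s, ρ s) = (∑ s, μ s) + ∑ s, ν s := by
  obtain ⟨A, B, C, hA, hB, hC, h⟩ := hLM.exists_mul_eq hMN hLN
  exact ⟨fun k _ hk => dPartial_le_add_of_mul_eq hLM.1 hMN.1 hB h hk,
    sum_eq_add_of_mul_eq hA hB hC h⟩
end
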